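/- arXiv:1208.0400 — 9 statements merged into one kernel-verified Lean document; each statement's English description precedes it below -/
import Mathlib

section
/- Budget balance holds at all message profiles, on and off equilibrium: for every message profile m = (m_i)_{i∈N} (with all price proposals nonnegative), the taxes determined by the mechanism sum to zero, i.e. Σ_{i∈N} t̂_i(m) = 0. -/
open Finset

/-- The set `C_j` of users affected by `j`: those `k` with `j ∈ R k`. -/
def affected {N : Type*} [Fintype N] [DecidableEq N] (R : N → Finset N) (j : N) : Finset N :=
  Finset.univ.filter (fun k => j ∈ R k)

/-- The action `â_j(m)` assigned to user `j` by the mechanism. -/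
noncomputable def ahat {N : Type*} [Fintype N] [DecidableEq N] (R : N → Finset N)
    (a : N → N → ℝ) (j : N) : ℝ :=
  (∑ k ∈ affected R j, a k j) / ((affected R j).card : ℝ)

/-- The personalized price `l_{ij}(m)` of user `i` for the action of `j`. -/
def price {N : Type*} (σ : N → N → N) (π : N → N → ℝ) (i j : N) : ℝ :=
  π (σ j i) j - π (σ j (σ j i)) j

/-- The tax `t̂_i(m)` of user `i`. -/
noncomputable def tax {N : Type*} [Fintype N] [DecidableEq N] (R : N → Finset N)
    (σ : N → N → N) (a π : N → N → ℝ) (i : N) : ℝ :=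
  ∑ j ∈ R i,
    (price σ π i j * ahat R a j
      + π i j * (a i j - a (σ j i) j) ^ 2
      - π (σ j i) j * (a (σ j i) j - a (σ j (σ j i)) j) ^ 2)

open Classical in
/-- User `i`'s payoff (valued in `EReal`) at the message profile `(a, π)`. -/
noncomputable def payoff {N : Type*} [Fintype N] [DecidableEq N] (R : N → Finset N)
    (σ : N → N → N) (A : N → Set ℝ) (u : ∀ i : N, (↥(R i) → ℝ) → ℝ)
    (a π : N → N → ℝ) (i : N) : EReal :=
  if ahat R a i ∈ A i then
    (((- tax R σ a π i + u i fun j => ahat R a j.1) : ℝ) : EReal)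
  else ⊥

/-- `(a, π)` is a Nash equilibrium of the game induced by the mechanism and the payoffs. -/
def IsNE {N : Type*} [Fintype N] [DecidableEq N] (R : N → Finset N)
    (σ : N → N → N) (A : N → Set ℝ) (u : ∀ i : N, (↥(R i) → ℝ) → ℝ)
    (a π : N → N → ℝ) : Prop :=
  (∀ i, ∀ j ∈ R i, 0 ≤ π i j) ∧
  ∀ (i : N) (a' π' : N → ℝ), (∀ j ∈ R i, 0 ≤ π' j) →
    payoff R σ A u (Function.update a i a') (Function.update π i π') i ≤
      payoff R σ A u a π i

/-- Budget balance at every message profile (on and off equilibrium). -/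
theorem budget_balance
    {N : Type*} [Fintype N] [DecidableEq N]
    (R : N → Finset N) (σ : N → N → N)
    (hR : ∀ i, i ∈ R i)
    (hC3 : ∀ j, 3 ≤ (affected R j).card)
    (hσ : ∀ j, Set.BijOn (σ j) ↑(affected R j) ↑(affected R j))
    (hcyc : ∀ j, ∀ x ∈ affected R j, ∀ y ∈ affected R j, ∃ n : ℕ, (σ j)^[n] x = y)
    (a π : N → N → ℝ)
    (hπ : ∀ i, ∀ j ∈ R i, 0 ≤ π i j) :
    ∑ i, tax R σ a π i = 0 := by
  have key : ∀ j (f : N → ℝ), ∑ i ∈ affected R j, f (σ j i) = ∑ i ∈ affected R j, f i := by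
    intro j f
    apply Finset.sum_bij (fun i _ => σ j i)
    · intro i hi; exact (hσ j).mapsTo hi
    · intro i hi i' hi' h; exact (hσ j).injOn hi hi' h
    · intro y hy
      obtain ⟨x, hx, hxy⟩ := (hσ j).surjOn hy
      exact ⟨x, hx, hxy⟩
    · intro i _; rfl
  have swap : ∑ i, tax R σ a π i =
      ∑ j, ∑ i ∈ affected R j,
        (price σ π i j * ahat R a j
          + π i j * (a i j - a (σ j i) j) ^ 2
          - π (σ j i) j * (a (σ j i) j - a (σ j (σ j i)) j) ^ 2) := by
    unfold tax
    refine Finset.sum_comm' ?_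
    intro i j
    simp [affected, Finset.mem_filter]
  rw [swap]
  refine Finset.sum_eq_zero fun j _ => ?_
  have h1 : ∑ i ∈ affected R j, price σ π i j = 0 := by
    have := key j (fun i => π i j)
    have := key j (fun i => π (σ j i) j)
    simp only [price, Finset.sum_sub_distrib]
    rw [key j (fun i => π (σ j i) j), key j (fun i => π i j)]
    ring
  have h2 : ∑ i ∈ affected R j, (π i j * (a i j - a (σ j i) j) ^ 2
      - π (σ j i) j * (a (σ j i) j - a (σ j (σ j i)) j) ^ 2) = 0 := by
    rw [Finset.sum_sub_distrib,
      key j (fun i => π i j * (a i j - a (σ j i) j) ^ 2), sub_self]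
  calc ∑ i ∈ affected R j,
        (price σ π i j * ahat R a j
          + π i j * (a i j - a (σ j i) j) ^ 2
          - π (σ j i) j * (a (σ j i) j - a (σ j (σ j i)) j) ^ 2)
      = (∑ i ∈ affected R j, price σ π i j) * ahat R a j
        + ∑ i ∈ affected R j, (π i j * (a i j - a (σ j i) j) ^ 2
          - π (σ j i) j * (a (σ j i) j - a (σ j (σ j i)) j) ^ 2) := by
        rw [Finset.sum_mul, ← Finset.sum_add_distrib]
        apply Finset.sum_congr rfl; intro i _; ring
    _ = 0 := by rw [h1, h2]; ring
end

section
/- Feasibility of Nash equilibrium allocations (Claim 1): if m* is a Nash equilibrium of the game induced by the mechanism and the users' payoffs, then â_i(m*) ∈ A_i for every i ∈ N and Σ_{i∈N} t̂_i(m*) = 0; hence the Nash equilibrium allocation ((â_i(m*))_{i∈N}, (t̂_i(m*))_{i∈N}) is a feasible solution of the centralized problem (P_C). -/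
open Finset

/-- Feasibility of Nash equilibrium allocations (Claim 1). -/
theorem NE_feasible
    {N : Type*} [Fintype N] [DecidableEq N]
    (R : N → Finset N) (σ : N → N → N)
    (hR : ∀ i, i ∈ R i)
    (hC3 : ∀ j, 3 ≤ (affected R j).card)
    (hσ : ∀ j, Set.BijOn (σ j) ↑(affected R j) ↑(affected R j))
    (hcyc : ∀ j, ∀ x ∈ affected R j, ∀ y ∈ affected R j, ∃ n : ℕ, (σ j)^[n] x = y)
    (A : N → Set ℝ)
    (hA0 : ∀ i, (0 : ℝ) ∈ A i) (hAconv : ∀ i, Convex ℝ (A i)) (hAcomp : ∀ i, IsCompact (A i))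
    (u : ∀ i : N, (↥(R i) → ℝ) → ℝ)
    (hu : ∀ i, ConcaveOn ℝ Set.univ (u i))
    (a π : N → N → ℝ)
    (hNE : IsNE R σ A u a π) :
    (∀ i, ahat R a i ∈ A i) ∧ ∑ i, tax R σ a π i = 0 := by

  classical
  have hfeas : ∀ i, ahat R a i ∈ A i := by
    intro i
    by_contra h
    set a' : N → ℝ := fun j => if j = i then -(∑ k ∈ (affected R i).erase i, a k i) else a i j
      with ha'
    have hiC : i ∈ affected R i := by simp [affected, hR i]
    have hsum : ∑ k ∈ affected R i, Function.update a i a' k i = 0 := by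
      rw [← Finset.add_sum_erase _ _ hiC]
      have h2 : ∀ k ∈ (affected R i).erase i, Function.update a i a' k i = a k i := by
        intro k hk
        rw [Function.update_of_ne (Finset.ne_of_mem_erase hk)]
      rw [Finset.sum_congr rfl h2]
      simp [ha']
    have hmem : ahat R (Function.update a i a') i = 0 := by
      simp [ahat, hsum]
    have hle := hNE.2 i a' (π i) (fun j hj => hNE.1 i j hj)
    rw [Function.update_eq_self] at hle
    simp only [payoff] at hle
    rw [if_neg h, if_pos (by rw [hmem]; exact hA0 i)] at hle
    exact EReal.coe_ne_bot _ (le_bot_iff.mp hle)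
  refine ⟨hfeas, ?_⟩
  have key : ∀ (j : N) (g : N → ℝ),
      ∑ i ∈ affected R j, g (σ j i) = ∑ i ∈ affected R j, g i := by
    intro j g
    refine Finset.sum_nbij (σ j) ?_ ?_ ?_ (fun x _ => rfl)
    · intro x hx
      exact Finset.mem_coe.mp ((hσ j).mapsTo (Finset.mem_coe.mpr hx))
    · exact (hσ j).injOn
    · exact (hσ j).surjOn
  have hswap : ∑ i, tax R σ a π i = ∑ j : N, ∑ i ∈ affected R j,
      (price σ π i j * ahat R a j + π i j * (a i j - a (σ j i) j) ^ 2
        - π (σ j i) j * (a (σ j i) j - a (σ j (σ j i)) j) ^ 2) := by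
    unfold tax
    calc ∑ i : N, ∑ j ∈ R i, (price σ π i j * ahat R a j + π i j * (a i j - a (σ j i) j) ^ 2
            - π (σ j i) j * (a (σ j i) j - a (σ j (σ j i)) j) ^ 2)
        = ∑ i : N, ∑ j : N, if j ∈ R i then (price σ π i j * ahat R a j
            + π i j * (a i j - a (σ j i) j) ^ 2
            - π (σ j i) j * (a (σ j i) j - a (σ j (σ j i)) j) ^ 2) else 0 := by
          refine Finset.sum_congr rfl fun i _ => ?_
          rw [Finset.sum_ite_mem, Finset.univ_inter]
      _ = ∑ j : N, ∑ i : N, if j ∈ R i then (price σ π i j * ahat R a j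
            + π i j * (a i j - a (σ j i) j) ^ 2
            - π (σ j i) j * (a (σ j i) j - a (σ j (σ j i)) j) ^ 2) else 0 := Finset.sum_comm
      _ = _ := by
          refine Finset.sum_congr rfl fun j _ => ?_
          rw [affected, Finset.sum_filter]
  rw [hswap]
  refine Finset.sum_eq_zero fun j _ => ?_
  have h1 : ∑ i ∈ affected R j, π (σ j i) j = ∑ i ∈ affected R j, π i j :=
    key j (fun k => π k j)
  have h2 : ∑ i ∈ affected R j, π (σ j (σ j i)) j = ∑ i ∈ affected R j, π (σ j i) j :=
    key j (fun k => π (σ j k) j)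
  have hprice : ∑ i ∈ affected R j, price σ π i j = 0 := by
    simp only [price, Finset.sum_sub_distrib, h1, h2]
    ring
  have hq : ∑ i ∈ affected R j, π (σ j i) j * (a (σ j i) j - a (σ j (σ j i)) j) ^ 2
      = ∑ i ∈ affected R j, π i j * (a i j - a (σ j i) j) ^ 2 :=
    key j (fun k => π k j * (a k j - a (σ j k) j) ^ 2)
  rw [Finset.sum_sub_distrib, Finset.sum_add_distrib, hq, ← Finset.sum_mul, hprice]
  ring
end

section
/- Complementary slackness at Nash equilibrium: if m* = ((a^{i*}, π^{i*}))_{i∈N} is a Nash equilibrium of the game induced by the mechanism and the users' payoffs, then for every i ∈ N and every j ∈ R_i, π^{i*}_j · (a^{i*}_j − a^{σ_j(i)*}_j)² = 0; that is, each user's price proposal for a neighbor j is zero unless its action proposal for j agrees with the action proposal of the next user in the cycle on C_j. -/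
open Finset

lemma sigma_sq_ne {N : Type*} [Fintype N] [DecidableEq N]
    (R : N → Finset N) (σ : N → N → N)
    (hC3 : ∀ j, 3 ≤ (affected R j).card)
    (hcyc : ∀ j, ∀ x ∈ affected R j, ∀ y ∈ affected R j, ∃ n : ℕ, (σ j)^[n] x = y)
    {i j : N} (hij : i ∈ affected R j) :
    σ j (σ j i) ≠ i := by
  intro h2
  have hiter : ∀ n, (σ j)^[n] i = i ∨ (σ j)^[n] i = σ j i := by
    intro n
    induction n with
    | zero => left; rfl
    | succ n ih =>
      rw [Function.iterate_succ_apply']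
      rcases ih with h | h
      · right; rw [h]
      · left; rw [h, h2]
  have hcard : ¬ (affected R j ⊆ {i, σ j i}) := by
    intro hs
    have h1 := Finset.card_le_card hs
    have h3 := Finset.card_insert_le i ({σ j i} : Finset N)
    have h4 := hC3 j
    simp only [Finset.card_singleton] at h3
    omega
  obtain ⟨y, hy, hyS⟩ := Finset.not_subset.mp hcard
  obtain ⟨n, hn⟩ := hcyc j i hij y hy
  rcases hiter n with h | h <;> rw [hn] at h <;> simp [h] at hyS

/-- Complementary slackness at Nash equilibrium. -/
theorem NE_complementary_slackness
    {N : Type*} [Fintype N] [DecidableEq N]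
    (R : N → Finset N) (σ : N → N → N)
    (hR : ∀ i, i ∈ R i)
    (hC3 : ∀ j, 3 ≤ (affected R j).card)
    (hσ : ∀ j, Set.BijOn (σ j) ↑(affected R j) ↑(affected R j))
    (hcyc : ∀ j, ∀ x ∈ affected R j, ∀ y ∈ affected R j, ∃ n : ℕ, (σ j)^[n] x = y)
    (A : N → Set ℝ)
    (hA0 : ∀ i, (0 : ℝ) ∈ A i) (hAconv : ∀ i, Convex ℝ (A i)) (hAcomp : ∀ i, IsCompact (A i))
    (u : ∀ i : N, (↥(R i) → ℝ) → ℝ)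
    (hu : ∀ i, ConcaveOn ℝ Set.univ (u i))
    (a π : N → N → ℝ)
    (hNE : IsNE R σ A u a π) :
    ∀ i : N, ∀ j ∈ R i, π i j * (a i j - a (σ j i) j) ^ 2 = 0 := by
  obtain ⟨hπ, hNE2⟩ := hNE
  intro i
  have hiC : i ∈ affected R i := by simp [affected, hR i]
  have hin : ahat R a i ∈ A i := by
    by_contra hni
    set a' : N → ℝ := fun _ => -(∑ k ∈ (affected R i).erase i, a k i) with ha'
    have h := hNE2 i a' (π i) (fun j hj => hπ i j hj)
    rw [Function.update_eq_self] at h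
    have hsum : ∑ k ∈ affected R i, Function.update a i a' k i = 0 := by
      rw [← Finset.add_sum_erase _ _ hiC]
      rw [Finset.sum_congr rfl (fun k hk =>
        by rw [Function.update_of_ne (Finset.ne_of_mem_erase hk)]),
        Function.update_self, ha']
      ring
    have hzero : ahat R (Function.update a i a') i = 0 := by
      unfold ahat; rw [hsum]; simp
    unfold payoff at h
    rw [if_neg hni, hzero, if_pos (hA0 i)] at h
    exact (EReal.bot_lt_coe _).not_ge h
  have h := hNE2 i (a i) 0 (fun _ _ => le_refl 0)
  rw [Function.update_eq_self] at h
  simp only [payoff, Function.update_eq_self, if_pos hin] at h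
  have hle := EReal.coe_le_coe_iff.mp h
  have hdiff : tax R σ a (Function.update π i 0) i
      = tax R σ a π i - ∑ j ∈ R i, π i j * (a i j - a (σ j i) j) ^ 2 := by
    unfold tax
    rw [← Finset.sum_sub_distrib]
    apply Finset.sum_congr rfl
    intro j hj
    have hij : i ∈ affected R j := by simp [affected, hj]
    have h1 : σ j (σ j i) ≠ i := sigma_sq_ne R σ hC3 hcyc hij
    have h2 : σ j i ≠ i := fun e => h1 (by rw [e, e])
    simp only [price, Function.update_of_ne h1, Function.update_of_ne h2,
      Function.update_self, Pi.zero_apply]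
    ring
  have hterm : ∀ j ∈ R i, 0 ≤ π i j * (a i j - a (σ j i) j) ^ 2 :=
    fun j hj => mul_nonneg (hπ i j hj) (sq_nonneg _)
  have hsum_le : ∑ j ∈ R i, π i j * (a i j - a (σ j i) j) ^ 2 ≤ 0 := by
    rw [hdiff] at hle; linarith
  have hz := (Finset.sum_eq_zero_iff_of_nonneg hterm).mp
    (le_antisymm hsum_le (Finset.sum_nonneg hterm))
  exact hz
end

section
/- Linear form of equilibrium taxes (Claim 2): if m* is a Nash equilibrium of the game induced by the mechanism and the users' payoffs, then the tax paid by each user at m* is linear in the equilibrium actions with coefficients given by its personalized prices: t̂_i(m*) = Σ_{j∈R_i} l_{ij}(m*) · â_j(m*) for every i ∈ N. -/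
open Finset

/-- Linear form of equilibrium taxes (Claim 2). -/
theorem NE_tax_linear
    {N : Type*} [Fintype N] [DecidableEq N]
    (R : N → Finset N) (σ : N → N → N)
    (hR : ∀ i, i ∈ R i)
    (hC3 : ∀ j, 3 ≤ (affected R j).card)
    (hσ : ∀ j, Set.BijOn (σ j) ↑(affected R j) ↑(affected R j))
    (hcyc : ∀ j, ∀ x ∈ affected R j, ∀ y ∈ affected R j, ∃ n : ℕ, (σ j)^[n] x = y)
    (A : N → Set ℝ)
    (hA0 : ∀ i, (0 : ℝ) ∈ A i) (hAconv : ∀ i, Convex ℝ (A i)) (hAcomp : ∀ i, IsCompact (A i))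
    (u : ∀ i : N, (↥(R i) → ℝ) → ℝ)
    (hu : ∀ i, ConcaveOn ℝ Set.univ (u i))
    (a π : N → N → ℝ)
    (hNE : IsNE R σ A u a π) :
    ∀ i : N, tax R σ a π i = ∑ j ∈ R i, price σ π i j * ahat R a j := by
  obtain ⟨hπnn, hdev⟩ := hNE
  have hmem : ∀ j i : N, j ∈ R i → i ∈ affected R j := by
    intro j i h; simp [affected, h]
  have hσne2 : ∀ j i : N, i ∈ affected R j → σ j (σ j i) ≠ i := by
    intro j i hi heq
    have horb : ∀ n : ℕ, (σ j)^[n] i = i ∨ (σ j)^[n] i = σ j i := by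
      intro n
      induction n with
      | zero => left; rfl
      | succ n ih =>
        rw [Function.iterate_succ_apply']
        rcases ih with h | h
        · rw [h]; right; rfl
        · rw [h]; left; exact heq
    have hsub : affected R j ⊆ {i, σ j i} := by
      intro y hy
      obtain ⟨n, hn⟩ := hcyc j i hi y hy
      rcases horb n with h | h <;> rw [hn] at h <;> simp [h]
    have h2 : (affected R j).card ≤ ({i, σ j i} : Finset N).card :=
      Finset.card_le_card hsub
    have h3 : (({i, σ j i} : Finset N)).card ≤ 2 := by
      have := Finset.card_insert_le i ({σ j i} : Finset N)
      simpa using this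
    have := hC3 j
    omega
  -- Step 1: equilibrium action is feasible
  have hAmem : ∀ i, ahat R a i ∈ A i := by
    intro i
    by_contra hcon
    set v : ℝ := -∑ k ∈ (affected R i).erase i, a k i with hv
    set a' : N → ℝ := Function.update (a i) i v with ha'
    have hpay := hdev i a' (π i) (fun j hj => hπnn i j hj)
    rw [Function.update_eq_self] at hpay
    have hiC : i ∈ affected R i := hmem i i (hR i)
    have hahat : ahat R (Function.update a i a') i = 0 := by
      have hsum : ∑ k ∈ affected R i, Function.update a i a' k i = 0 := by
        rw [← Finset.add_sum_erase _ _ hiC]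
        have h1 : Function.update a i a' i i = v := by simp [ha']
        have h2 : ∀ k ∈ (affected R i).erase i,
            Function.update a i a' k i = a k i := by
          intro k hk
          rw [Function.update_of_ne (Finset.ne_of_mem_erase hk)]
        rw [Finset.sum_congr rfl h2, h1, hv]
        ring
      unfold ahat
      rw [hsum]; simp
    unfold payoff at hpay
    rw [hahat] at hpay
    rw [if_pos (hA0 i), if_neg hcon] at hpay
    exact absurd hpay (not_le.mpr (EReal.bot_lt_coe _))
  -- Step 2: key vanishing of quadratic penalties
  have hkey : ∀ i j : N, j ∈ R i → π i j * (a i j - a (σ j i) j) ^ 2 = 0 := by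
    intro i
    have hpay := hdev i (a i) 0 (fun j _ => le_refl 0)
    rw [Function.update_eq_self] at hpay
    set π' : N → N → ℝ := Function.update π i 0 with hπ'
    simp only [payoff, if_pos (hAmem i)] at hpay
    have hle : tax R σ a π i ≤ tax R σ a π' i := by
      have := EReal.coe_le_coe_iff.mp hpay
      linarith
    have htax : tax R σ a π' i
        = tax R σ a π i - ∑ j ∈ R i, π i j * (a i j - a (σ j i) j) ^ 2 := by
      unfold tax
      rw [← Finset.sum_sub_distrib]
      apply Finset.sum_congr rfl
      intro j hjR
      have hiC : i ∈ affected R j := hmem j i hjR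
      have h2 : σ j (σ j i) ≠ i := hσne2 j i hiC
      have h1 : σ j i ≠ i := by
        intro h
        exact h2 (by rw [h]; exact h)
      have e1 : π' (σ j i) j = π (σ j i) j := by
        rw [hπ', Function.update_of_ne h1]
      have e2 : π' (σ j (σ j i)) j = π (σ j (σ j i)) j := by
        rw [hπ', Function.update_of_ne h2]
      have e3 : π' i j = 0 := by rw [hπ']; simp
      simp only [price, e1, e2, e3]
      ring
    rw [htax] at hle
    have hnn : ∀ j ∈ R i, 0 ≤ π i j * (a i j - a (σ j i) j) ^ 2 :=
      fun j hj => mul_nonneg (hπnn i j hj) (sq_nonneg _)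
    have hzero : ∑ j ∈ R i, π i j * (a i j - a (σ j i) j) ^ 2 = 0 :=
      le_antisymm (by linarith) (Finset.sum_nonneg hnn)
    exact fun j hj => (Finset.sum_eq_zero_iff_of_nonneg hnn).mp hzero j hj
  -- Conclusion
  intro i
  unfold tax
  apply Finset.sum_congr rfl
  intro j hj
  have hiC : i ∈ affected R j := hmem j i hj
  have hterm1 := hkey i j hj
  have hkC : σ j i ∈ affected R j := (hσ j).mapsTo hiC
  have hjRk : j ∈ R (σ j i) := by
    simpa [affected] using hkC
  have hterm2 := hkey (σ j i) j hjRk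
  rw [hterm1, hterm2]
  ring
end

section
/- Per-user optimality at Nash equilibrium: if m* is a Nash equilibrium of the game induced by the mechanism and the users' payoffs, then each user maximizes its aggregate utility at its equilibrium allocation, given its equilibrium personalized prices: for every i ∈ N and every ā : R_i → ℝ with ā_i ∈ A_i, −Σ_{j∈R_i} l_{ij}(m*)·ā_j + u_i(ā) ≤ −t̂_i(m*) + u_i((â_j(m*))_{j∈R_i}). -/
open Finset

/-!
Let user `i` deviate from the equilibrium by announcing the zero price for every `j ∈ R i`
and the action proposals that move the mechanism's allocation to a prescribed `ā`. Its own
price proposals do not enter its personalized prices, because a cycle of length at least `3`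
moves `i` off itself in one and in two steps; so with a zero own price its tax is at most the
linear charge `∑ l_{ij} ā_j`, the penalty term of the next user being nonnegative. The Nash
inequality against this deviation is the claim.
-/

open Function

lemma card_le_of_isPeriodicPt {α : Type*} {f : α → α} {x : α} {p : ℕ} {s : Finset α}
    (hreach : ∀ y ∈ s, ∃ n, f^[n] x = y) (hx : IsPeriodicPt f p x) (hp : 0 < p) :
    s.card ≤ p := by
  classical
  have hsub : s ⊆ (range p).image fun n => f^[n] x := by
    intro y hy
    obtain ⟨n, rfl⟩ := hreach y hy
    exact mem_image.mpr ⟨n % p, mem_range.mpr (Nat.mod_lt n hp), hx.iterate_mod_apply n⟩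
  simpa using (card_le_card hsub).trans card_image_le

lemma apply_ne_and_apply_apply_ne_of_three_le_card {α : Type*} {f : α → α} {x : α}
    {s : Finset α} (hreach : ∀ y ∈ s, ∃ n, f^[n] x = y) (hs : 3 ≤ s.card) :
    f x ≠ x ∧ f (f x) ≠ x := by
  refine ⟨fun h => ?_, fun h => ?_⟩
  · have := card_le_of_isPeriodicPt (p := 1) hreach (by simpa [IsPeriodicPt, IsFixedPt]) one_pos
    omega
  · have := card_le_of_isPeriodicPt (p := 2) hreach (by simpa [IsPeriodicPt, IsFixedPt]) two_pos
    omega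

lemma price_update_of_ne {N : Type*} [DecidableEq N] (σ : N → N → N) (π : N → N → ℝ)
    (π' : N → ℝ) {i j : N} (h₁ : σ j i ≠ i) (h₂ : σ j (σ j i) ≠ i) :
    price σ (update π i π') i j = price σ π i j := by
  rw [price, price, update_of_ne h₁, update_of_ne h₂]

section Mechanism

variable {N : Type*} [Fintype N] [DecidableEq N] {R : N → Finset N}

@[simp]
lemma mem_affected {j k : N} : k ∈ affected R j ↔ j ∈ R k := by
  simp [affected]

/-- The action proposals of user `i` under which the mechanism allocates `b j` to every
`j ∈ R i`, given the proposals `a` of the other users. -/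
noncomputable def steer (R : N → Finset N) (a : N → N → ℝ) (i : N) (b : N → ℝ) : N → ℝ :=
  fun j => (affected R j).card * b j - ∑ k ∈ (affected R j).erase i, a k j

lemma ahat_update_steer (a : N → N → ℝ) {i j : N} (b : N → ℝ) (hj : j ∈ R i) :
    ahat R (update a i (steer R a i b)) j = b j := by
  have hi : i ∈ affected R j := mem_affected.mpr hj
  have hcard : ((affected R j).card : ℝ) ≠ 0 := by
    exact_mod_cast (card_pos.mpr ⟨i, hi⟩).ne'
  have hothers : ∑ k ∈ (affected R j).erase i, update a i (steer R a i b) k j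
      = ∑ k ∈ (affected R j).erase i, a k j :=
    sum_congr rfl fun k hk => by rw [update_of_ne (ne_of_mem_erase hk)]
  rw [ahat, ← add_sum_erase _ _ hi, hothers, update_self, steer]
  field_simp
  ring

lemma tax_le_sum_price_mul_ahat (σ : N → N → N) (a π : N → N → ℝ) {i : N}
    (hown : ∀ j ∈ R i, π i j = 0) (hnext : ∀ j ∈ R i, 0 ≤ π (σ j i) j) :
    tax R σ a π i ≤ ∑ j ∈ R i, price σ π i j * ahat R a j := by
  refine sum_le_sum fun j hj => ?_
  rw [hown j hj, zero_mul, add_zero, sub_le_self_iff]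
  exact mul_nonneg (hnext j hj) (sq_nonneg _)

lemma IsNE.le_of_deviation {σ : N → N → N} {A : N → Set ℝ} {u : ∀ i : N, (↥(R i) → ℝ) → ℝ}
    {a π : N → N → ℝ} (hNE : IsNE R σ A u a π) (i : N) (a' π' : N → ℝ)
    (hπ' : ∀ j ∈ R i, 0 ≤ π' j) (hA : ahat R (update a i a') i ∈ A i) :
    - tax R σ (update a i a') (update π i π') i + u i (fun j => ahat R (update a i a') j.1)
      ≤ - tax R σ a π i + u i (fun j => ahat R a j.1) := by
  have hdev := hNE.2 i a' π' hπ'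
  rw [payoff, if_pos hA] at hdev
  by_cases hAeq : ahat R a i ∈ A i
  · rwa [payoff, if_pos hAeq, EReal.coe_le_coe_iff] at hdev
  · rw [payoff, if_neg hAeq, le_bot_iff] at hdev
    exact absurd hdev (EReal.coe_ne_bot _)

end Mechanism

theorem NE_per_user_optimality_general
    {N : Type*} [Fintype N] [DecidableEq N]
    (R : N → Finset N) (σ : N → N → N)
    (hR : ∀ i, i ∈ R i)
    (hC3 : ∀ j, 3 ≤ (affected R j).card)
    (hσ : ∀ j, Set.BijOn (σ j) ↑(affected R j) ↑(affected R j))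
    (hcyc : ∀ j, ∀ x ∈ affected R j, ∀ y ∈ affected R j, ∃ n : ℕ, (σ j)^[n] x = y)
    (A : N → Set ℝ)
    (u : ∀ i : N, (↥(R i) → ℝ) → ℝ)
    (a π : N → N → ℝ)
    (hNE : IsNE R σ A u a π) :
    ∀ i : N, ∀ abar : ↥(R i) → ℝ, abar ⟨i, hR i⟩ ∈ A i →
      - (∑ j : ↥(R i), price σ π i j.1 * abar j) + u i abar ≤
        - tax R σ a π i + u i (fun j => ahat R a j.1) := by
  intro i abar habar
  set b : N → ℝ := fun j => if h : j ∈ R i then abar ⟨j, h⟩ else 0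
  have hahat : (fun j : ↥(R i) => ahat R (update a i (steer R a i b)) j.1) = abar := by
    funext j
    rw [ahat_update_steer a b j.2]
    exact dif_pos j.2
  have hcycle : ∀ j ∈ R i, σ j i ≠ i ∧ σ j (σ j i) ≠ i := fun j hj =>
    apply_ne_and_apply_apply_ne_of_three_le_card (hcyc j i (mem_affected.mpr hj)) (hC3 j)
  have hNash := hNE.le_of_deviation i (steer R a i b) 0 (fun _ _ => le_rfl)
    (by rwa [← congrFun hahat ⟨i, hR i⟩] at habar)
  have htax : tax R σ (update a i (steer R a i b)) (update π i 0) i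
      ≤ ∑ j : ↥(R i), price σ π i j.1 * abar j := by
    refine (tax_le_sum_price_mul_ahat σ _ _ (fun j _ => by simp) fun j hj => ?_).trans_eq ?_
    · rw [update_of_ne (hcycle j hj).1]
      exact hNE.1 _ _ (mem_affected.mp ((hσ j).mapsTo (mem_affected.mpr hj)))
    · rw [← sum_coe_sort, ← hahat]
      exact sum_congr rfl fun j _ => by
        rw [price_update_of_ne σ π 0 (hcycle j j.2).1 (hcycle j j.2).2]
  rw [hahat] at hNash
  linarith

/-- Per-user optimality at Nash equilibrium: each user maximizes its
aggregate utility at its equilibrium allocation, given its equilibrium personalized prices. -/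
theorem NE_per_user_optimality
    {N : Type*} [Fintype N] [DecidableEq N]
    (R : N → Finset N) (σ : N → N → N)
    (hR : ∀ i, i ∈ R i)
    (hC3 : ∀ j, 3 ≤ (affected R j).card)
    (hσ : ∀ j, Set.BijOn (σ j) ↑(affected R j) ↑(affected R j))
    (hcyc : ∀ j, ∀ x ∈ affected R j, ∀ y ∈ affected R j, ∃ n : ℕ, (σ j)^[n] x = y)
    (A : N → Set ℝ)
    (hA0 : ∀ i, (0 : ℝ) ∈ A i) (hAconv : ∀ i, Convex ℝ (A i)) (hAcomp : ∀ i, IsCompact (A i))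
    (u : ∀ i : N, (↥(R i) → ℝ) → ℝ)
    (hu : ∀ i, ConcaveOn ℝ Set.univ (u i))
    (a π : N → N → ℝ)
    (hNE : IsNE R σ A u a π) :
    ∀ i : N, ∀ abar : ↥(R i) → ℝ, abar ⟨i, hR i⟩ ∈ A i →
      - (∑ j : ↥(R i), price σ π i j.1 * abar j) + u i abar ≤
        - tax R σ a π i + u i (fun j => ahat R a j.1) :=
  NE_per_user_optimality_general R σ hR hC3 hσ hcyc A u a π hNE
end

section
/- Individual rationality (Theorem 1(a) / Claim 3): if m* is a Nash equilibrium of the game induced by the mechanism and the users' payoffs, then every user weakly prefers its equilibrium allocation to the zero allocation: for every i ∈ N, −t̂_i(m*) + u_i((â_j(m*))_{j∈R_i}) ≥ u_i(0), where 0 denotes the all-zero action profile on R_i (whose tax is 0). -/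
open Finset

/-- Individual rationality (Theorem 1(a) / Claim 3): at a Nash equilibrium
every user weakly prefers its equilibrium allocation to the zero allocation. -/
theorem NE_individually_rational
    {N : Type*} [Fintype N] [DecidableEq N]
    (R : N → Finset N) (σ : N → N → N)
    (hR : ∀ i, i ∈ R i)
    (hC3 : ∀ j, 3 ≤ (affected R j).card)
    (hσ : ∀ j, Set.BijOn (σ j) ↑(affected R j) ↑(affected R j))
    (hcyc : ∀ j, ∀ x ∈ affected R j, ∀ y ∈ affected R j, ∃ n : ℕ, (σ j)^[n] x = y)
    (A : N → Set ℝ)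
    (hA0 : ∀ i, (0 : ℝ) ∈ A i) (hAconv : ∀ i, Convex ℝ (A i)) (hAcomp : ∀ i, IsCompact (A i))
    (u : ∀ i : N, (↥(R i) → ℝ) → ℝ)
    (hu : ∀ i, ConcaveOn ℝ Set.univ (u i))
    (a π : N → N → ℝ)
    (hNE : IsNE R σ A u a π) :
    ∀ i : N, u i (fun _ => 0) ≤ - tax R σ a π i + u i (fun j => ahat R a j.1) := by
  classical
  intro i
  -- deviation: force all ahat's to zero, prices to zero
  set a' : N → ℝ := fun j => a i j - ∑ k ∈ affected R j, a k j with ha'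
  set π' : N → ℝ := fun _ => 0 with hπ'def
  have hπ' : ∀ j ∈ R i, 0 ≤ π' j := fun _ _ => le_refl 0
  have key := hNE.2 i a' π' hπ'
  -- ahat of deviated profile is zero on R i
  have hai : ∀ j ∈ R i, ahat R (Function.update a i a') j = 0 := by
    intro j hj
    have hiC : i ∈ affected R j := by simp [affected, hj]
    have hsum : ∑ k ∈ affected R j, Function.update a i a' k j = 0 := by
      rw [← Finset.add_sum_erase _ _ hiC, Function.update_self,
        Finset.sum_congr rfl (fun k hk =>
          congrFun (Function.update_of_ne (Finset.ne_of_mem_erase hk) a' a) j),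
        Finset.sum_erase_eq_sub hiC, ha']
      ring
    simp [ahat, hsum]
  -- tax of deviated profile is nonpositive
  have htax : tax R σ (Function.update a i a') (Function.update π i π') i ≤ 0 := by
    apply Finset.sum_nonpos
    intro j hj
    have h1 : ahat R (Function.update a i a') j = 0 := hai j hj
    have h2 : Function.update π i π' i j = 0 := by
      rw [Function.update_self]
    have h3 : 0 ≤ Function.update π i π' (σ j i) j := by
      by_cases h : σ j i = i
      · rw [h, Function.update_self]
      · rw [Function.update_of_ne h]
        have hiC : i ∈ affected R j := by simp [affected, hj]
        have : σ j i ∈ affected R j := (hσ j).mapsTo hiC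
        have : j ∈ R (σ j i) := by simpa [affected] using this
        exact hNE.1 _ _ this
    rw [h1, h2]
    nlinarith [sq_nonneg (Function.update a i a' (σ j i) j -
      Function.update a i a' (σ j (σ j i)) j), h3,
      mul_nonneg h3 (sq_nonneg (Function.update a i a' (σ j i) j -
        Function.update a i a' (σ j (σ j i)) j))]
  -- deviated payoff
  have hifeas : ahat R (Function.update a i a') i ∈ A i := by
    rw [hai i (hR i)]; exact hA0 i
  have hfun : (fun j : ↥(R i) => ahat R (Function.update a i a') j.1)
      = (fun _ => 0) := by
    funext j; exact hai j.1 j.2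
  have hdev : payoff R σ A u (Function.update a i a') (Function.update π i π') i
      = (((- tax R σ (Function.update a i a') (Function.update π i π') i
          + u i fun _ => 0) : ℝ) : EReal) := by
    rw [payoff, if_pos hifeas, hfun]
  rw [hdev] at key
  -- the equilibrium payoff must be feasible
  by_cases hfeas : ahat R a i ∈ A i
  · rw [payoff, if_pos hfeas] at key
    have := EReal.coe_le_coe_iff.mp key
    linarith
  · rw [payoff, if_neg hfeas] at key
    exact absurd (le_bot_iff.mp key) (EReal.coe_ne_bot _)
end

section
/- Existence of supporting personalized prices (Theorem 2(a) / Claim 5): suppose in addition that each u_i is differentiable on ℝ^{R_i}. If a* is a feasible action profile that maximizes Σ_{i∈N} u_i((a_j)_{j∈R_i}) over all feasible action profiles, then there exist real numbers l*_{ij} (one for each i ∈ N and j ∈ R_i) such that Σ_{k∈C_j} l*_{kj} = 0 for every j ∈ N, and for every i ∈ N the restriction (a*_j)_{j∈R_i} maximizes the map ā ↦ −Σ_{j∈R_i} l*_{ij}·ā_j + u_i(ā) over all ā : R_i → ℝ with ā_i ∈ A_i (and ā_j ∈ ℝ unconstrained for j ∈ R_i \ {i}). -/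
open Finset

/-
Let `d k j` be the partial derivative of `u k` in the action of `j` at `a*`, and
`S j = ∑ k, d k j` the corresponding partial derivative of the welfare. User `k` is charged
`d k j` for the action of `j ≠ k` and `d j j - S j` for its own action, so the prices of each
action sum to zero. User `i`'s objective then equals `u i ā - Du_i(a*) ā + S i * ā i`: the first
part is maximized at `a*` by the gradient inequality for the concave `u i`, and
`S i * ā i ≤ S i * a* i` on `A i` is the first-order condition for maximizing the welfare over
the convex set `∏ i, A i`.
-/

section GradientInequality

variable {E : Type*} [NormedAddCommGroup E] [NormedSpace ℝ E] {s : Set E} {f : E → ℝ}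
  {f' : E →L[ℝ] ℝ} {x y : E}

theorem ConcaveOn.le_add_of_hasFDerivAt (hf : ConcaveOn ℝ s f) (hx : x ∈ s) (hy : y ∈ s)
    (hf' : HasFDerivAt f f' x) : f y ≤ f x + f' (y - x) := by
  set L : ℝ →ᵃ[ℝ] E := AffineMap.lineMap x y
  have hL : HasDerivAt L (y - x) 0 := by
    have hLfun : ⇑L = fun t : ℝ => t • (y - x) + x :=
      funext fun t => AffineMap.lineMap_apply_module' x y t
    simpa [hLfun] using ((hasDerivAt_id (0 : ℝ)).smul_const (y - x)).add_const x
  have hslope := (hf.comp_affineMap L).slope_le_of_hasDerivAt (x := 0) (y := 1)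
    (by simpa [L] using hx) (by simpa [L] using hy) zero_lt_one
    ((show HasFDerivAt f f' (L 0) by simpa [L] using hf').comp_hasDerivAt 0 hL)
  simp only [slope_def_field, Function.comp_apply, AffineMap.lineMap_apply_one,
    AffineMap.lineMap_apply_zero, sub_zero, div_one, L] at hslope
  linarith

end GradientInequality

section SupportingPrices

variable {N : Type*} (R : N → Finset N) (u : ∀ i : N, (↥(R i) → ℝ) → ℝ)

def welfare [Fintype N] (b : N → ℝ) : ℝ := ∑ i, u i fun j => b j.1

variable {R u} in
theorem hasFDerivAt_welfare [Fintype N] {a : N → ℝ}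
    (hu : ∀ k, DifferentiableAt ℝ (u k) fun m => a m.1) :
    HasFDerivAt (welfare R u) (∑ k, (fderiv ℝ (u k) fun m => a m.1).comp
      (ContinuousLinearMap.pi fun j : ↥(R k) => ContinuousLinearMap.proj (j : N))) a :=
  HasFDerivAt.fun_sum fun k _ => by
    have hrestrict := (ContinuousLinearMap.pi fun j : ↥(R k) =>
      ContinuousLinearMap.proj (R := ℝ) (φ := fun _ : N => ℝ) (j : N)).hasFDerivAt (x := a)
    exact (hu k).hasFDerivAt.comp a hrestrict

variable [DecidableEq N] (a : N → ℝ)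

noncomputable def marginalUtility (k j : N) : ℝ :=
  fderiv ℝ (u k) (fun m => a m.1) fun m => (Pi.single j 1 : N → ℝ) m.1

variable {R u a}

theorem marginalUtility_eq_zero {k j : N} (h : j ∉ R k) : marginalUtility R u a k j = 0 := by
  have hzero : (fun m : ↥(R k) => (Pi.single j 1 : N → ℝ) m.1) = 0 :=
    funext fun m => Pi.single_eq_of_ne (fun hm : (m : N) = j => h (hm ▸ m.2)) _
  rw [marginalUtility, hzero, map_zero]

theorem fderiv_apply_eq_sum_marginalUtility (i : N) (v : ↥(R i) → ℝ) :
    fderiv ℝ (u i) (fun m => a m.1) v = ∑ j : ↥(R i), v j * marginalUtility R u a i j := by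
  rw [← ContinuousLinearMap.coe_coe, LinearMap.pi_apply_eq_sum_univ]
  refine sum_congr rfl fun j _ => ?_
  rw [smul_eq_mul, marginalUtility, ContinuousLinearMap.coe_coe]
  congr 2
  funext m
  rw [Pi.single_apply]
  exact if_congr (eq_comm.trans Subtype.ext_iff) rfl rfl

variable [Fintype N] (R u a)

noncomputable def marginalWelfare (j : N) : ℝ := ∑ k, marginalUtility R u a k j

noncomputable def supportingPrice (k j : N) : ℝ :=
  marginalUtility R u a k j - if k = j then marginalWelfare R u a j else 0

variable {R u a}

theorem marginalWelfare_eq_sum_affected (j : N) :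
    marginalWelfare R u a j = ∑ k ∈ affected R j, marginalUtility R u a k j :=
  (sum_filter_of_ne fun _ _ hk => not_not.1 (mt marginalUtility_eq_zero hk)).symm

theorem marginalWelfare_mul_sub_nonpos {A : N → Set ℝ} (hA : ∀ i, Convex ℝ (A i))
    (hu : ∀ k, DifferentiableAt ℝ (u k) fun m => a m.1) (ha : a ∈ Set.univ.pi A)
    (hmax : IsMaxOn (welfare R u) (Set.univ.pi A) a) {j : N} {x : ℝ} (hx : x ∈ A j) :
    marginalWelfare R u a j * (x - a j) ≤ 0 := by
  have hx' : Function.update a j x ∈ Set.univ.pi A :=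
    (Set.update_mem_pi_iff_of_mem ha).2 fun _ => hx
  have hseg := (convex_pi fun i _ => hA i).segment_subset ha hx'
  have hfoc := hmax.localize.hasFDerivWithinAt_nonpos (hasFDerivAt_welfare hu).hasFDerivWithinAt
    (sub_mem_posTangentConeAt_of_segment_subset hseg)
  have hdir : Function.update a j x - a = (x - a j) • Pi.single j 1 := by
    rw [Pi.update_eq_sub_add_single, ← Pi.single_smul', smul_eq_mul, mul_one, Pi.single_sub]
    abel
  rw [hdir, map_smul, smul_eq_mul] at hfoc
  simpa [marginalWelfare, marginalUtility, mul_comm] using hfoc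

theorem sum_affected_supportingPrice {j : N} (hj : j ∈ R j) :
    ∑ k ∈ affected R j, supportingPrice R u a k j = 0 := by
  have hmem : j ∈ affected R j := mem_filter.2 ⟨mem_univ j, hj⟩
  simp only [supportingPrice, sum_sub_distrib, sum_ite_eq', if_pos hmem,
    marginalWelfare_eq_sum_affected, sub_self]

theorem sum_supportingPrice_mul {i : N} (hi : i ∈ R i) (v : ↥(R i) → ℝ) :
    ∑ j : ↥(R i), supportingPrice R u a i j.1 * v j =
      fderiv ℝ (u i) (fun m => a m.1) v - marginalWelfare R u a i * v ⟨i, hi⟩ := by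
  have hdiag : ∑ j : ↥(R i), (if i = j.1 then marginalWelfare R u a j.1 else 0) * v j =
      marginalWelfare R u a i * v ⟨i, hi⟩ := by
    rw [Fintype.sum_eq_single ⟨i, hi⟩ fun j hj => by
      rw [if_neg fun h => hj (Subtype.ext h.symm), zero_mul], if_pos rfl]
  simp only [supportingPrice, sub_mul, sum_sub_distrib, hdiag,
    fderiv_apply_eq_sum_marginalUtility, mul_comm (v _)]

end SupportingPrices

theorem exists_supporting_prices_general
    {N : Type*} [Fintype N] [DecidableEq N]
    (R : N → Finset N)
    (hR : ∀ i, i ∈ R i)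
    (A : N → Set ℝ)
    (hAconv : ∀ i, Convex ℝ (A i))
    (u : ∀ i : N, (↥(R i) → ℝ) → ℝ)
    (hu : ∀ i, ConcaveOn ℝ Set.univ (u i))
    (hdiff : ∀ i, Differentiable ℝ (u i))
    (astar : N → ℝ)
    (hfeas : ∀ i, astar i ∈ A i)
    (hopt : ∀ b : N → ℝ, (∀ i, b i ∈ A i) →
      ∑ i, u i (fun j => b j.1) ≤ ∑ i, u i (fun j => astar j.1)) :
    ∃ l : N → N → ℝ,
      (∀ j : N, ∑ k ∈ affected R j, l k j = 0) ∧
      ∀ i : N, ∀ abar : ↥(R i) → ℝ, abar ⟨i, hR i⟩ ∈ A i →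
        - (∑ j : ↥(R i), l i j.1 * abar j) + u i abar ≤
          - (∑ j : ↥(R i), l i j.1 * astar j.1) + u i (fun j => astar j.1) := by
  have hmax : IsMaxOn (welfare R u) (Set.univ.pi A) astar :=
    isMaxOn_iff.2 fun b hb => hopt b fun i => hb i (Set.mem_univ i)
  refine ⟨supportingPrice R u astar, fun j => sum_affected_supportingPrice (hR j),
    fun i abar habar => ?_⟩
  have hgrad := (hu i).le_add_of_hasFDerivAt (Set.mem_univ _) (Set.mem_univ abar)
    (hdiff i fun j => astar j.1).hasFDerivAt
  have hfoc := marginalWelfare_mul_sub_nonpos hAconv (fun k => hdiff k _)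
    (fun k _ => hfeas k) hmax habar
  rw [sum_supportingPrice_mul (hR i), sum_supportingPrice_mul (hR i)]
  rw [map_sub] at hgrad
  linarith

/-- Existence of supporting personalized prices (Theorem 2(a) / Claim 5). -/
theorem exists_supporting_prices
    {N : Type*} [Fintype N] [DecidableEq N]
    (R : N → Finset N)
    (hR : ∀ i, i ∈ R i)
    (hC3 : ∀ j, 3 ≤ (affected R j).card)
    (A : N → Set ℝ)
    (hA0 : ∀ i, (0 : ℝ) ∈ A i) (hAconv : ∀ i, Convex ℝ (A i)) (hAcomp : ∀ i, IsCompact (A i))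
    (u : ∀ i : N, (↥(R i) → ℝ) → ℝ)
    (hu : ∀ i, ConcaveOn ℝ Set.univ (u i))
    (hdiff : ∀ i, Differentiable ℝ (u i))
    (astar : N → ℝ)
    (hfeas : ∀ i, astar i ∈ A i)
    (hopt : ∀ b : N → ℝ, (∀ i, b i ∈ A i) →
      ∑ i, u i (fun j => b j.1) ≤ ∑ i, u i (fun j => astar j.1)) :
    ∃ l : N → N → ℝ,
      (∀ j : N, ∑ k ∈ affected R j, l k j = 0) ∧
      ∀ i : N, ∀ abar : ↥(R i) → ℝ, abar ⟨i, hR i⟩ ∈ A i →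
        - (∑ j : ↥(R i), l i j.1 * abar j) + u i abar ≤
          - (∑ j : ↥(R i), l i j.1 * astar j.1) + u i (fun j => astar j.1) :=
  exists_supporting_prices_general R hR A hAconv u hu hdiff astar hfeas hopt
end

section
/- Solutions of the equilibrium conditions are Nash equilibria realizing the optimum (Claim 6): let a* be a feasible action profile and let l*_{ij} (i ∈ N, j ∈ R_i) be real numbers such that Σ_{k∈C_j} l*_{kj} = 0 for every j ∈ N and, for every i ∈ N, (a*_j)_{j∈R_i} maximizes ā ↦ −Σ_{j∈R_i} l*_{ij}·ā_j + u_i(ā) over all ā : R_i → ℝ with ā_i ∈ A_i. Then every message profile m* = ((a^{i*}, π^{i*}))_{i∈N} satisfying (i) (1/|C_j|)·Σ_{k∈C_j} a^{k*}_j = a*_j for all j ∈ N, (ii) π^{σ_j(i)*}_j − π^{σ_j(σ_j(i))*}_j = l*_{ij} for all i ∈ N and j ∈ R_i, (iii) π^{i*}_j·(a^{i*}_j − a^{σ_j(i)*}_j)² = 0 for all i ∈ N and j ∈ R_i, and (iv) π^{i*}_j ≥ 0 for all i ∈ N and j ∈ R_i, is a Nash equilibrium of the game induced by the mechanism and the users'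 payoffs, and at m* the mechanism yields â_j(m*) = a*_j for all j ∈ N, l_{ij}(m*) = l*_{ij} for all i and j ∈ R_i, and t̂_i(m*) = Σ_{j∈R_i} l*_{ij}·a*_j for all i ∈ N. -/
open Finset

lemma iter_orbit {α : Type*} (f : α → α) (i : α) (h : f (f i) = i) :
    ∀ n, f^[n] i = i ∨ f^[n] i = f i := by
  intro n
  induction n with
  | zero => left; rfl
  | succ n ih =>
    rw [Function.iterate_succ_apply']
    rcases ih with h' | h'
    · right; rw [h']
    · left; rw [h', h]

lemma sigma_props {N : Type*} [Fintype N] [DecidableEq N] (R : N → Finset N) (σ : N → N → N)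
    (hC3 : ∀ j, 3 ≤ (affected R j).card)
    (hσ : ∀ j, Set.BijOn (σ j) ↑(affected R j) ↑(affected R j))
    (hcyc : ∀ j, ∀ x ∈ affected R j, ∀ y ∈ affected R j, ∃ n : ℕ, (σ j)^[n] x = y)
    {i j : N} (hi : i ∈ affected R j) :
    σ j i ∈ affected R j ∧ σ j (σ j i) ∈ affected R j ∧ σ j i ≠ i ∧ σ j (σ j i) ≠ i := by
  have m1 : σ j i ∈ affected R j := by
    have := (hσ j).mapsTo (Finset.mem_coe.2 hi); exact_mod_cast this
  have m2 : σ j (σ j i) ∈ affected R j := by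
    have := (hσ j).mapsTo (Finset.mem_coe.2 m1); exact_mod_cast this
  refine ⟨m1, m2, ?_, ?_⟩
  · intro h
    have horb : ∀ n, (σ j)^[n] i = i := by
      intro n; induction n with
      | zero => rfl
      | succ n ih => rw [Function.iterate_succ_apply', ih, h]
    have hsub : affected R j ⊆ {i} := by
      intro y hy
      obtain ⟨n, hn⟩ := hcyc j i hi y hy
      simp [← hn, horb n]
    have hle := Finset.card_le_card hsub
    simp only [Finset.card_singleton] at hle
    have := hC3 j
    omega
  · intro h
    have horb := iter_orbit (σ j) i h
    have hsub : affected R j ⊆ {i, σ j i} := by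
      intro y hy
      obtain ⟨n, hn⟩ := hcyc j i hi y hy
      rcases horb n with h' | h' <;> simp [← hn, h']
    have hle := Finset.card_le_card hsub
    have h2 : ({i, σ j i} : Finset N).card ≤ 2 :=
      (Finset.card_insert_le _ _).trans (by simp)
    have := hC3 j
    omega

/-- Claim 6: every solution of the equilibrium conditions (i)–(iv) is a
Nash equilibrium realizing the optimal allocation and the supporting prices/taxes. -/
theorem solutions_of_conditions_are_NE
    {N : Type*} [Fintype N] [DecidableEq N]
    (R : N → Finset N) (σ : N → N → N)
    (hR : ∀ i, i ∈ R i)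
    (hC3 : ∀ j, 3 ≤ (affected R j).card)
    (hσ : ∀ j, Set.BijOn (σ j) ↑(affected R j) ↑(affected R j))
    (hcyc : ∀ j, ∀ x ∈ affected R j, ∀ y ∈ affected R j, ∃ n : ℕ, (σ j)^[n] x = y)
    (A : N → Set ℝ)
    (hA0 : ∀ i, (0 : ℝ) ∈ A i) (hAconv : ∀ i, Convex ℝ (A i)) (hAcomp : ∀ i, IsCompact (A i))
    (u : ∀ i : N, (↥(R i) → ℝ) → ℝ)
    (hu : ∀ i, ConcaveOn ℝ Set.univ (u i))
    -- the target action profile, the supporting personalized prices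
    (astar : N → ℝ) (hfeas : ∀ i, astar i ∈ A i)
    (l : N → N → ℝ)
    (hlsum : ∀ j : N, ∑ k ∈ affected R j, l k j = 0)
    (hmax : ∀ i : N, ∀ abar : ↥(R i) → ℝ, abar ⟨i, hR i⟩ ∈ A i →
      - (∑ j : ↥(R i), l i j.1 * abar j) + u i abar ≤
        - (∑ j : ↥(R i), l i j.1 * astar j.1) + u i (fun j => astar j.1))
    -- a message profile satisfying conditions (i)-(iv)
    (a π : N → N → ℝ)
    (h1 : ∀ j : N, (∑ k ∈ affected R j, a k j) / ((affected R j).card : ℝ) = astar j)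
    (h2 : ∀ i : N, ∀ j ∈ R i, π (σ j i) j - π (σ j (σ j i)) j = l i j)
    (h3 : ∀ i : N, ∀ j ∈ R i, π i j * (a i j - a (σ j i) j) ^ 2 = 0)
    (h4 : ∀ i : N, ∀ j ∈ R i, 0 ≤ π i j) :
    IsNE R σ A u a π ∧
    (∀ j : N, ahat R a j = astar j) ∧
    (∀ i : N, ∀ j ∈ R i, price σ π i j = l i j) ∧
    (∀ i : N, tax R σ a π i = ∑ j ∈ R i, l i j * astar j) := by
  have part2 : ∀ j : N, ahat R a j = astar j := fun j => h1 j
  have part3 : ∀ i : N, ∀ j ∈ R i, price σ π i j = l i j := fun i j hj => h2 i j hj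
  have part4 : ∀ i : N, tax R σ a π i = ∑ j ∈ R i, l i j * astar j := by
    intro i
    unfold tax
    apply Finset.sum_congr rfl
    intro j hj
    have hmem : i ∈ affected R j := by simp [affected, hj]
    obtain ⟨m1, m2, _, _⟩ := sigma_props R σ hC3 hσ hcyc hmem
    have hj' : j ∈ R (σ j i) := by simpa [affected] using m1
    rw [part3 i j hj, part2 j, h3 i j hj, h3 (σ j i) j hj']
    ring
  refine ⟨⟨h4, ?_⟩, part2, part3, part4⟩
  intro i a' π' hπ'
  set a'' := Function.update a i a' with ha''
  set π'' := Function.update π i π' with hπ''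
  have hEq : payoff R σ A u a π i
      = (((- (∑ j ∈ R i, l i j * astar j) + u i fun j => astar j.1 : ℝ)) : EReal) := by
    unfold payoff
    rw [part2 i, if_pos (hfeas i), part4 i]
    have huu : (fun j : ↥(R i) => ahat R a j.1) = fun j => astar j.1 :=
      funext fun j => part2 j.1
    rw [huu]
  rw [hEq]
  by_cases hcond : ahat R a'' i ∈ A i
  · have hkey : ∑ j ∈ R i, l i j * ahat R a'' j ≤ tax R σ a'' π'' i := by
      unfold tax
      apply Finset.sum_le_sum
      intro j hj
      have hmem : i ∈ affected R j := by simp [affected, hj]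
      obtain ⟨m1, m2, hne1, hne2⟩ := sigma_props R σ hC3 hσ hcyc hmem
      have hj' : j ∈ R (σ j i) := by simpa [affected] using m1
      have e1 : π'' (σ j i) j = π (σ j i) j := by
        rw [hπ'', Function.update_of_ne hne1]
      have e2 : π'' (σ j (σ j i)) j = π (σ j (σ j i)) j := by
        rw [hπ'', Function.update_of_ne hne2]
      have e3 : a'' (σ j i) j = a (σ j i) j := by
        rw [ha'', Function.update_of_ne hne1]
      have e4 : a'' (σ j (σ j i)) j = a (σ j (σ j i)) j := by
        rw [ha'', Function.update_of_ne hne2]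
      have eprice : price σ π'' i j = l i j := by
        rw [price, e1, e2]; exact h2 i j hj
      have equad : π'' (σ j i) j * (a'' (σ j i) j - a'' (σ j (σ j i)) j) ^ 2 = 0 := by
        rw [e1, e3, e4]; exact h3 (σ j i) j hj'
      have hpos : 0 ≤ π'' i j * (a'' i j - a'' (σ j i) j) ^ 2 := by
        apply mul_nonneg _ (sq_nonneg _)
        rw [hπ'', Function.update_self]
        exact hπ' j hj
      rw [eprice, equad]
      linarith
    have habar : (fun j : ↥(R i) => ahat R a'' j.1) ⟨i, hR i⟩ ∈ A i := hcond
    have hmx := hmax i (fun j : ↥(R i) => ahat R a'' j.1) habar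
    have hsum : ∑ j : ↥(R i), l i j.1 * ahat R a'' j.1
        = ∑ j ∈ R i, l i j * ahat R a'' j :=
      Finset.sum_coe_sort (R i) (fun j => l i j * ahat R a'' j)
    have hsum2 : ∑ j : ↥(R i), l i j.1 * astar j.1 = ∑ j ∈ R i, l i j * astar j :=
      Finset.sum_coe_sort (R i) (fun j => l i j * astar j)
    rw [hsum, hsum2] at hmx
    unfold payoff
    rw [if_pos hcond]
    apply EReal.coe_le_coe_iff.mpr
    linarith
  · unfold payoff
    rw [if_neg hcond]
    exact bot_le
end

section
/- Existence of solutions of the equilibrium conditions: let a* ∈ ℝ^N be any action profile and let l*_{ij} (i ∈ N, j ∈ R_i) be real numbers with Σ_{k∈C_j} l*_{kj} = 0 for every j ∈ N. Then there exists a message profile m* = ((a^{i*}, π^{i*}))_{i∈N} satisfying (i) (1/|C_j|)·Σ_{k∈C_j} a^{k*}_j = a*_j for all j ∈ N, (ii) π^{σ_j(i)*}_j − π^{σ_j(σ_j(i))*}_j = l*_{ij} for all i ∈ N and j ∈ R_i, (iii) π^{i*}_j·(a^{i*}_j − a^{σ_j(i)*}_j)² = 0 for all i ∈ N and j ∈ R_i,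 and (iv) π^{i*}_j ≥ 0 for all i ∈ N and j ∈ R_i; in particular one may take a^{k*}_j = a*_j for all k ∈ C_j. -/
open Finset

lemma key_diff {N : Type*} [DecidableEq N] (s : Finset N) (hs : s.Nonempty)
    (f : N → N) (hmaps : ∀ x ∈ s, f x ∈ s) (hinj : Set.InjOn f ↑s)
    (hcyc : ∀ x ∈ s, ∀ y ∈ s, ∃ n : ℕ, f^[n] x = y)
    (g : N → ℝ) (hg : ∑ x ∈ s, g x = 0) :
    ∃ π : N → ℝ, (∀ x, 0 ≤ π x) ∧ ∀ x ∈ s, π x - π (f x) = g x := by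
  classical
  obtain ⟨x0, hx0⟩ := hs
  -- iterates stay in s
  have hit : ∀ (n : ℕ), ∀ x ∈ s, f^[n] x ∈ s := by
    intro n
    induction n with
    | zero => simpa using fun x hx => hx
    | succ n ih =>
      intro x hx
      rw [Function.iterate_succ_apply]
      exact ih _ (hmaps x hx)
  -- iterates injective on s
  have hitinj : ∀ (n : ℕ), Set.InjOn (f^[n]) ↑s := by
    intro n
    induction n with
    | zero => simpa using Set.injOn_id _
    | succ n ih =>
      intro x hx y hy h
      rw [Function.iterate_succ_apply, Function.iterate_succ_apply] at h
      exact hinj hx hy (ih (hmaps x hx) (hmaps y hy) h)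
  -- existence of a positive period
  have hper : ∃ m : ℕ, 0 < m ∧ f^[m] x0 = x0 := by
    obtain ⟨n, hn⟩ := hcyc (f x0) (hmaps x0 hx0) x0 hx0
    exact ⟨n + 1, Nat.succ_pos n, by rwa [Function.iterate_succ_apply]⟩
  set p := Nat.find hper with hp_def
  obtain ⟨hp_pos, hp_fix⟩ := Nat.find_spec hper
  have hp_min : ∀ m : ℕ, 0 < m → f^[m] x0 = x0 → p ≤ m := by
    intro m hm hfm
    exact Nat.find_min' hper ⟨hm, hfm⟩
  -- reduce iterates mod p
  have hmod : ∀ m : ℕ, f^[m] x0 = f^[m % p] x0 := by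
    intro m
    conv_lhs => rw [← Nat.mod_add_div m p]
    rw [Function.iterate_add_apply]
    congr 1
    rw [Function.iterate_mul]
    exact Function.iterate_fixed hp_fix _
  -- index of x in the orbit
  have hexists : ∀ x ∈ s, ∃ n : ℕ, f^[n] x0 = x := fun x hx => hcyc x0 hx0 x hx
  set nx : N → ℕ := fun x => if hx : x ∈ s then Nat.find (hexists x hx) else 0 with hnx_def
  have hnx_spec : ∀ x ∈ s, f^[nx x] x0 = x := by
    intro x hx
    simp only [hnx_def, dif_pos hx]
    exact Nat.find_spec (hexists x hx)
  have hnx_min : ∀ x, ∀ hx : x ∈ s, ∀ m : ℕ, f^[m] x0 = x → nx x ≤ m := by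
    intro x hx m hm
    simp only [hnx_def, dif_pos hx]
    exact Nat.find_min' (hexists x hx) hm
  have hnx_lt : ∀ x ∈ s, nx x < p := by
    intro x hx
    have h1 : f^[nx x % p] x0 = x := by rw [← hmod]; exact hnx_spec x hx
    have := hnx_min x hx _ h1
    exact lt_of_le_of_lt this (Nat.mod_lt _ hp_pos)
  -- the orbit map on range p is injective and covers s
  have hkey : ∀ a b : ℕ, a < b → b < p → f^[a] x0 = f^[b] x0 → False := by
    intro a b hab hbp h
    have h2 : f^[a] (f^[b - a] x0) = f^[a] x0 := by
      rw [← Function.iterate_add_apply, show a + (b - a) = b by omega]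
      exact h.symm
    have h3 : f^[b - a] x0 = x0 := hitinj a (hit _ _ hx0) hx0 h2
    have := hp_min (b - a) (by omega) h3
    omega
  have horbinj : Set.InjOn (fun m => f^[m] x0) ↑(Finset.range p) := by
    intro m hm m' hm' h
    simp only [Finset.coe_range, Set.mem_Iio] at hm hm'
    rcases lt_trichotomy m m' with hlt | heq | hlt
    · exact absurd (hkey m m' hlt hm' h) (not_false)
    · exact heq
    · exact absurd (hkey m' m hlt hm h.symm) (not_false)
  have horbimg : (Finset.range p).image (fun m => f^[m] x0) = s := by
    apply Finset.Subset.antisymm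
    · intro x hx
      simp only [Finset.mem_image, Finset.mem_range] at hx
      obtain ⟨m, _, rfl⟩ := hx
      exact hit m x0 hx0
    · intro x hx
      simp only [Finset.mem_image, Finset.mem_range]
      exact ⟨nx x, hnx_lt x hx, hnx_spec x hx⟩
  have hsum : ∑ m ∈ Finset.range p, g (f^[m] x0) = 0 := by
    rw [← Finset.sum_image (fun m hm m' hm' h => horbinj (by simpa using hm) (by simpa using hm') h),
      horbimg, hg]
  -- the construction
  set M : ℝ := ∑ m ∈ Finset.range p, |g (f^[m] x0)| with hM_def
  set π : N → ℝ := fun x =>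
    if x ∈ s then M - ∑ m ∈ Finset.range (nx x), g (f^[m] x0) else 0 with hπ_def
  have hπ_nonneg : ∀ x, 0 ≤ π x := by
    intro x
    simp only [hπ_def]
    split
    · rename_i hx
      have h1 : ∑ m ∈ Finset.range (nx x), g (f^[m] x0) ≤ M := by
        calc ∑ m ∈ Finset.range (nx x), g (f^[m] x0)
            ≤ ∑ m ∈ Finset.range (nx x), |g (f^[m] x0)| :=
              Finset.sum_le_sum fun m _ => le_abs_self _
          _ ≤ M := Finset.sum_le_sum_of_subset_of_nonneg
              (Finset.range_subset_range.2 (le_of_lt (hnx_lt x hx))) (fun _ _ _ => abs_nonneg _)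
      linarith
    · exact le_refl 0
  refine ⟨π, hπ_nonneg, ?_⟩
  intro x hx
  have hfx : f x ∈ s := hmaps x hx
  have hk := hnx_spec x hx
  have hklt := hnx_lt x hx
  have hfx_it : f^[nx x + 1] x0 = f x := by
    rw [Function.iterate_succ_apply', hk]
  by_cases hcase : nx x + 1 = p
  · -- f x = x0
    have hfx0 : f x = x0 := by rw [← hfx_it, hcase, hp_fix]
    have hnfx : nx (f x) = 0 := by
      have := hnx_min (f x) hfx 0 (by simp [hfx0])
      omega
    have hsplit : ∑ m ∈ Finset.range p, g (f^[m] x0)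
        = ∑ m ∈ Finset.range (nx x), g (f^[m] x0) + g (f^[nx x] x0) := by
      rw [← hcase, Finset.sum_range_succ]
    simp only [hπ_def, if_pos hx, if_pos hfx, hnfx]
    rw [hk] at hsplit
    rw [hsum] at hsplit
    simp only [Finset.range_zero, Finset.sum_empty]
    linarith
  · -- nx (f x) = nx x + 1
    have hnfx : nx (f x) = nx x + 1 := by
      have hle : nx (f x) ≤ nx x + 1 := hnx_min (f x) hfx _ hfx_it
      rcases Nat.lt_or_ge (nx (f x)) (nx x + 1) with hlt | hge
      · exfalso
        have hspec := hnx_spec (f x) hfx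
        rcases Nat.eq_zero_or_pos (nx (f x)) with h0 | hpos
        · rw [h0] at hspec
          simp only [Function.iterate_zero_apply] at hspec
          have : f^[nx x + 1] x0 = x0 := by rw [hfx_it, ← hspec]
          have := hp_min (nx x + 1) (Nat.succ_pos _) this
          omega
        · obtain ⟨m, hm⟩ := Nat.exists_eq_succ_of_ne_zero (Nat.pos_iff_ne_zero.mp hpos)
          rw [hm] at hspec
          rw [Function.iterate_succ_apply'] at hspec
          have : f^[m] x0 = x := hinj (hit m x0 hx0) hx (by rw [hspec])
          have := hnx_min x hx m this
          omega
      · omega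
    simp only [hπ_def, if_pos hx, if_pos hfx, hnfx]
    rw [Finset.sum_range_succ, hk]
    ring

/-- Existence of solutions of the equilibrium conditions (i)–(iv);
in particular one may take every action proposal for `j` equal to `a*_j`. -/
theorem equilibrium_conditions_solvable
    {N : Type*} [Fintype N] [DecidableEq N]
    (R : N → Finset N) (σ : N → N → N)
    (hR : ∀ i, i ∈ R i)
    (hC3 : ∀ j, 3 ≤ (affected R j).card)
    (hσ : ∀ j, Set.BijOn (σ j) ↑(affected R j) ↑(affected R j))
    (hcyc : ∀ j, ∀ x ∈ affected R j, ∀ y ∈ affected R j, ∃ n : ℕ, (σ j)^[n] x = y)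
    (astar : N → ℝ)
    (l : N → N → ℝ)
    (hlsum : ∀ j : N, ∑ k ∈ affected R j, l k j = 0) :
    ∃ a π : N → N → ℝ,
      (∀ j : N, ∀ k ∈ affected R j, a k j = astar j) ∧
      (∀ j : N, (∑ k ∈ affected R j, a k j) / ((affected R j).card : ℝ) = astar j) ∧
      (∀ i : N, ∀ j ∈ R i, π (σ j i) j - π (σ j (σ j i)) j = l i j) ∧
      (∀ i : N, ∀ j ∈ R i, π i j * (a i j - a (σ j i) j) ^ 2 = 0) ∧
      (∀ i : N, ∀ j ∈ R i, 0 ≤ π i j) := by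
  classical
  cases isEmpty_or_nonempty N with
  | inl h =>
    exact ⟨fun _ j => astar j, fun _ _ => 0, fun j => isEmptyElim j, fun j => isEmptyElim j,
      fun i => isEmptyElim i, fun i => isEmptyElim i, fun i => isEmptyElim i⟩
  | inr h =>
    have hmem : ∀ i j : N, j ∈ R i → i ∈ affected R j := by
      intro i j hj
      simp [affected, hj]
    have hne : ∀ j, (affected R j).Nonempty := by
      intro j
      rw [← Finset.card_pos]
      have := hC3 j
      omega
    have H : ∀ j : N, ∃ π : N → ℝ, (∀ x, 0 ≤ π x) ∧
        ∀ x ∈ affected R j, π x - π (σ j x) = l x j := by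
      intro j
      exact key_diff (affected R j) (hne j) (σ j)
        (fun x hx => (hσ j).mapsTo (by exact_mod_cast hx))
        (hσ j).injOn (hcyc j) (fun x => l x j) (hlsum j)
    choose P hP1 hP2 using H
    refine ⟨fun _ j => astar j,
      fun i j => P j (Function.invFunOn (σ j) ↑(affected R j) i), ?_, ?_, ?_, ?_, ?_⟩
    · intro j k _; rfl
    · intro j
      have hc : ((affected R j).card : ℝ) ≠ 0 := by
        have := hC3 j
        positivity
      rw [Finset.sum_const, nsmul_eq_mul]
      field_simp
    · intro i j hj
      have hi : i ∈ affected R j := hmem i j hj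
      have hi' : (i : N) ∈ (↑(affected R j) : Set N) := hi
      have hσi : σ j i ∈ (↑(affected R j) : Set N) := (hσ j).mapsTo hi'
      simp only
      rw [(hσ j).injOn.leftInvOn_invFunOn hi', (hσ j).injOn.leftInvOn_invFunOn hσi]
      exact hP2 j i hi
    · intro i j hj
      simp
    · intro i j hj
      exact hP1 j _
end
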